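/- Let (Ω,d) and (Ω',d') be A-uniform metric spaces and let f: Ω → Ω' be a continuous map that is ∂-Lipschitz with data (L,λ). Then the induced map f: (Ω,k) → (Ω',k') between the quasihyperbolizations is H-Lipschitz with H = 4A²L. -/

import Mathlib

open Metric Set Filter Topology
open scoped ENNReal Classical

noncomputable section

namespace Paper

variable {X Y : Type*}

/-- The distance function of a metric space. -/
def distFun (X : Type*) [MetricSpace X] : X → X → ℝ := fun p q => dist p q

/-- `e` is a genuine metric distance function. -/
def IsMetricDist (e : X → X → ℝ) : Prop :=
  (∀ x, e x x = 0) ∧ (∀ x y, x ≠ y → 0 < e x y) ∧ (∀ x y, e x y = e y x) ∧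
    ∀ x y z, e x z ≤ e x y + e y z

/-- Cauchy sequence with respect to the distance function `e`. -/
def CauchyWrt (e : X → X → ℝ) (u : ℕ → X) : Prop :=
  ∀ δ : ℝ, 0 < δ → ∃ N : ℕ, ∀ m, N ≤ m → ∀ n, N ≤ n → e (u m) (u n) < δ

/-- The sequence converges, w.r.t. `e`, to a point of the space. -/
def ConvWrt (e : X → X → ℝ) (u : ℕ → X) : Prop :=
  ∃ y : X, Tendsto (fun n => e (u n) y) atTop (𝓝 0)

/-- The space is incomplete with respect to `e`:
some Cauchy sequence does not converge in the space. -/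
def IncompleteWrt (e : X → X → ℝ) : Prop :=
  ∃ u : ℕ → X, CauchyWrt e u ∧ ¬ ConvWrt e u

/-- Distance from `x` to the metric boundary (the completion minus the space),
measured w.r.t. `e`: the infimum of the limits `lim_n e x (u n)` over all Cauchy
sequences `u` that have no limit in the space. -/
def bdryDistWrt (e : X → X → ℝ) (x : X) : ℝ :=
  sInf { r : ℝ | ∃ u : ℕ → X, CauchyWrt e u ∧ ¬ ConvWrt e u ∧
    Tendsto (fun n => e x (u n)) atTop (𝓝 r) }

/-- Sequential compactness of a set w.r.t. `e`. -/
def SeqCompactWrt (e : X → X → ℝ) (s : Set X) : Prop :=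
  ∀ u : ℕ → X, (∀ n, u n ∈ s) → ∃ y ∈ s, ∃ φ : ℕ → ℕ, StrictMono φ ∧
    Tendsto (fun n => e (u (φ n)) y) atTop (𝓝 0)

/-- Local compactness w.r.t. `e`: every point has arbitrarily small compact closed balls. -/
def LocallyCompactWrt (e : X → X → ℝ) : Prop :=
  ∀ x : X, ∀ r : ℝ, 0 < r → ∃ r' : ℝ, 0 < r' ∧ r' ≤ r ∧ SeqCompactWrt e { y | e x y ≤ r' }

/-- Continuity of a curve on a set of parameters, w.r.t. `e`. -/
def ContinuousOnWrt (e : X → X → ℝ) (γ : ℝ → X) (I : Set ℝ) : Prop :=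
  ∀ t ∈ I, ∀ δ : ℝ, 0 < δ → ∃ η : ℝ, 0 < η ∧ ∀ s ∈ I, |s - t| < η → e (γ s) (γ t) < δ

/-- The length (total variation) of the curve `γ` on the parameter set `I`, w.r.t. `e`. -/
def varOn (e : X → X → ℝ) (γ : ℝ → X) (I : Set ℝ) : ℝ≥0∞ :=
  ⨆ p : ℕ × { u : ℕ → ℝ // Monotone u ∧ ∀ i, u i ∈ I },
    ∑ i ∈ Finset.range p.1, ENNReal.ofReal (e (γ (p.2.1 (i + 1))) (γ (p.2.1 i)))

/-- `X` with distance `e` is an `A`-uniform metric space: it is a locally compact,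
incomplete metric space any two of whose points are joined by an `A`-uniform curve. -/
def IsUniformSpcWrt (e : X → X → ℝ) (A : ℝ) : Prop :=
  IsMetricDist e ∧ LocallyCompactWrt e ∧ IncompleteWrt e ∧
  ∀ x y : X, ∃ (a b : ℝ) (γ : ℝ → X), a ≤ b ∧ ContinuousOnWrt e γ (Icc a b) ∧
    γ a = x ∧ γ b = y ∧
    varOn e γ (Icc a b) ≤ ENNReal.ofReal (A * e x y) ∧
    ∀ t ∈ Icc a b, min (varOn e γ (Icc a t)) (varOn e γ (Icc t b)) ≤
      ENNReal.ofReal (A * bdryDistWrt e (γ t))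

/-- `f` is `∂`-Lipschitz with data `(L, lam)`. -/
def PartialLipschitzWrt (e : X → X → ℝ) (e' : Y → Y → ℝ) (L lam : ℝ) (f : X → Y) : Prop :=
  ∀ x y z : X, e y x < lam * bdryDistWrt e x → e z x < lam * bdryDistWrt e x →
    e' (f y) (f z) / bdryDistWrt e' (f x) ≤ L * (e y z / bdryDistWrt e x)

/-- `f` (with inverse `g`) is `∂`-biLipschitz with data `(L, lam)`. -/
def PartialBiLipschitzWrt (e : X → X → ℝ) (e' : Y → Y → ℝ) (L lam : ℝ)
    (f : X → Y) (g : Y → X) : Prop :=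
  1 ≤ L ∧ Function.LeftInverse g f ∧ Function.RightInverse g f ∧
    PartialLipschitzWrt e e' L lam f ∧ PartialLipschitzWrt e' e L lam g

/-- Cross-ratio of a quadruple of points, w.r.t. `e`. -/
def crossRatioWrt (e : X → X → ℝ) (x y z w : X) : ℝ := e x z * e y w / (e x y * e z w)

/-- `f` is `η`-quasimöbius. -/
def QuasiMobiusWrt (e : X → X → ℝ) (e' : Y → Y → ℝ) (η : ℝ → ℝ) (f : X → Y) : Prop :=
  ∀ x y z w : X, x ≠ y → x ≠ z → x ≠ w → y ≠ z → y ≠ w → z ≠ w →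
    crossRatioWrt e' (f x) (f y) (f z) (f w) ≤ η (crossRatioWrt e x y z w)

/-- `f` is `η`-quasisymmetric. -/
def QuasiSymmetricWrt (e : X → X → ℝ) (e' : Y → Y → ℝ) (η : ℝ → ℝ) (f : X → Y) : Prop :=
  ∀ x y z : X, ∀ t : ℝ, 0 ≤ t → e x y ≤ t * e x z → e' (f x) (f y) ≤ η t * e' (f x) (f z)

/-- `η` is (the restriction to `[0,∞)` of) a self-homeomorphism of `[0,∞)`:
continuous, strictly increasing, fixing `0`, and tending to `∞`. -/
def IsControlFun (η : ℝ → ℝ) : Prop :=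
  ContinuousOn η (Ici 0) ∧ StrictMonoOn η (Ici 0) ∧ η 0 = 0 ∧ Tendsto η atTop atTop

/-- The conformal deformation distance with conformal factor `ρ`: the infimum of
`∫ ρ ∘ γ` over all `1`-Lipschitz (w.r.t. `e`) curves joining `x` to `y`
(equivalently, the infimum of `∫_γ ρ ds` over all rectifiable curves joining `x` to `y`). -/
def confDistWrt (e : X → X → ℝ) (ρ : X → ℝ) (x y : X) : ℝ :=
  sInf { l : ℝ | ∃ (T : ℝ) (γ : ℝ → X), 0 ≤ T ∧
    (∀ s ∈ Icc 0 T, ∀ t ∈ Icc 0 T, e (γ s) (γ t) ≤ |s - t|) ∧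
    γ 0 = x ∧ γ T = y ∧ l = ∫ t in (0:ℝ)..T, ρ (γ t) }

/-- The quasihyperbolic metric of the space with distance `e`. -/
def quasiHypWrt (e : X → X → ℝ) : X → X → ℝ :=
  confDistWrt e fun z => (bdryDistWrt e z)⁻¹

/-- `γ` is a geodesic segment from `x` to `y`, parametrized by arclength on `[0, e x y]`. -/
def IsGeodesicSegWrt (e : X → X → ℝ) (γ : ℝ → X) (x y : X) : Prop :=
  γ 0 = x ∧ γ (e x y) = y ∧
    ∀ s ∈ Icc 0 (e x y), ∀ t ∈ Icc 0 (e x y), e (γ s) (γ t) = |s - t|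

/-- Any two points are joined by a geodesic. -/
def GeodesicSpaceWrt (e : X → X → ℝ) : Prop := ∀ x y : X, ∃ γ : ℝ → X, IsGeodesicSegWrt e γ x y

/-- The image of a geodesic segment. -/
def segImageWrt (e : X → X → ℝ) (γ : ℝ → X) (x y : X) : Set X := γ '' Icc 0 (e x y)

/-- `δ`-hyperbolicity: every geodesic triangle is `δ`-thin. -/
def DeltaHyperbolicWrt (e : X → X → ℝ) (δ : ℝ) : Prop :=
  ∀ (x y z : X) (γ₁ γ₂ γ₃ : ℝ → X),
    IsGeodesicSegWrt e γ₁ x y → IsGeodesicSegWrt e γ₂ y z → IsGeodesicSegWrt e γ₃ z x →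
    (∀ p ∈ segImageWrt e γ₁ x y, ∃ q ∈ segImageWrt e γ₂ y z ∪ segImageWrt e γ₃ z x, e p q ≤ δ) ∧
    (∀ p ∈ segImageWrt e γ₂ y z, ∃ q ∈ segImageWrt e γ₁ x y ∪ segImageWrt e γ₃ z x, e p q ≤ δ) ∧
    (∀ p ∈ segImageWrt e γ₃ z x, ∃ q ∈ segImageWrt e γ₁ x y ∪ segImageWrt e γ₂ y z, e p q ≤ δ)

/-- `γ` is a geodesic ray (defined on `[0,∞)`). -/
def IsGeodesicRayWrt (e : X → X → ℝ) (γ : ℝ → X) : Prop :=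
  ∀ s ∈ Ici (0:ℝ), ∀ t ∈ Ici (0:ℝ), e (γ s) (γ t) = |s - t|

/-- `γ` is a geodesic line. -/
def IsGeodesicLineWrt (e : X → X → ℝ) (γ : ℝ → X) : Prop :=
  ∀ s t : ℝ, e (γ s) (γ t) = |s - t|

/-- Two rays are at bounded distance from each other (represent the same
point of the Gromov boundary). -/
def RayEquivWrt (e : X → X → ℝ) (γ σ : ℝ → X) : Prop :=
  ∃ c : ℝ, ∀ t ∈ Ici (0:ℝ), e (γ t) (σ t) ≤ c

/-- The infimal distance from `x` to the set `s`, w.r.t. `e`. -/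
def infDistWrt (e : X → X → ℝ) (x : X) (s : Set X) : ℝ := sInf (e x '' s)

/-- `X` is `K`-roughly starlike from the point `z`. -/
def RoughStarlikeFromPointWrt (e : X → X → ℝ) (K : ℝ) (z : X) : Prop :=
  ∀ x : X, ∃ γ : ℝ → X, IsGeodesicRayWrt e γ ∧ γ 0 = z ∧ infDistWrt e x (γ '' Ici 0) ≤ K

/-- `X` is `K`-roughly starlike from the Gromov boundary point represented by the
geodesic ray `ρ`: every point lies within distance `K` of a geodesic line starting
from that boundary point. -/
def RoughStarlikeFromRayWrt (e : X → X → ℝ) (K : ℝ) (ρ : ℝ → X) : Prop :=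
  ∀ x : X, ∃ γ : ℝ → X, IsGeodesicLineWrt e γ ∧ RayEquivWrt e (fun t => γ (-t)) ρ ∧
    infDistWrt e x (range γ) ≤ K

/-- The Busemann function of the geodesic ray `ρ`:
`b_ρ(x) = lim_{t→∞} (e (ρ t) x - t) = inf_{t ≥ 0} (e (ρ t) x - t)`. -/
def busemannWrt (e : X → X → ℝ) (ρ : ℝ → X) (x : X) : ℝ :=
  sInf ((fun t => e (ρ t) x - t) '' Ici 0)

/-- `b ∈ 𝔅̂(X)` (either a translated distance function or a translated Busemann
function), and `X` is `K`-roughly starlike from the basepoint of `b`. -/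
def BhatStarlike (e : X → X → ℝ) (K : ℝ) (b : X → ℝ) : Prop :=
  (∃ (z : X) (s : ℝ), (∀ x, b x = e x z + s) ∧ RoughStarlikeFromPointWrt e K z) ∨
  (∃ (ρ : ℝ → X) (s : ℝ), IsGeodesicRayWrt e ρ ∧ (∀ x, b x = busemannWrt e ρ x + s) ∧
    RoughStarlikeFromRayWrt e K ρ)

/-- `ρ` is a Gehring–Hayman density with constant `M`: the `ρ`-length of any geodesic
is at most `M` times the conformal distance between its endpoints. -/
def IsGHDensityWrt (e : X → X → ℝ) (M : ℝ) (ρ : X → ℝ) : Prop :=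
  ∀ (x y : X) (γ : ℝ → X), IsGeodesicSegWrt e γ x y →
    (∫ t in (0:ℝ)..(e x y), ρ (γ t)) ≤ M * confDistWrt e ρ x y

/-- The density `ρ_{ε,b}(x) = e^{-ε b(x)}`. -/
def uniformizationDensity (b : X → ℝ) (ε : ℝ) : X → ℝ := fun x => Real.exp (-ε * b x)

/-- The Gromov product of `x` and `y` based at `z`. -/
def gromovProdWrt (e : X → X → ℝ) (z x y : X) : ℝ := (e x z + e y z - e x y) / 2

/-- The sequence `u` represents the Gromov boundary point of the geodesic ray `ρ`
(with respect to the basepoint `z`). -/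
def SeqRepWrt (e : X → X → ℝ) (z : X) (ρ : ℝ → X) (u : ℕ → X) : Prop :=
  Tendsto (fun n => gromovProdWrt e z (u n) (ρ n)) atTop atTop

/-- The Gromov product, based at `z`, of the two boundary points represented by the
geodesic rays `ρ` and `σ` (valued in `[0,∞]`). -/
def bGromovProdWrt (e : X → X → ℝ) (z : X) (ρ σ : ℝ → X) : ℝ≥0∞ :=
  ⨅ (u : { u : ℕ → X // SeqRepWrt e z ρ u }) (v : { v : ℕ → X // SeqRepWrt e z σ v }),
    Filter.liminf (fun n => ENNReal.ofReal (gromovProdWrt e z (u.1 n) (v.1 n))) atTop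

/-- `S(x) = sup_{ω ∈ ∂X} inf_{ξ ∈ ∂X} (ω|ξ)_x`. -/
def Sfun (e : X → X → ℝ) (x : X) : ℝ≥0∞ :=
  ⨆ (ω : { ρ : ℝ → X // IsGeodesicRayWrt e ρ }),
    ⨅ (ξ : { ρ : ℝ → X // IsGeodesicRayWrt e ρ }), bGromovProdWrt e x ω.1 ξ.1

/-- The filter at the left end of the interval `I`. -/
def leftEndFilter (I : Set ℝ) : Filter ℝ :=
  if BddBelow I then 𝓝[I] (sInf I) else atBot ⊓ 𝓟 I

/-- The filter at the right end of the interval `I`. -/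
def rightEndFilter (I : Set ℝ) : Filter ℝ :=
  if BddAbove I then 𝓝[I] (sSup I) else atTop ⊓ 𝓟 I

/-- `γ : I → Ω` is an `A`-uniform curve: it is rectifiable with endpoints
`γ₋, γ₊` in the completion `Ω̄` satisfying `ℓ(γ) ≤ A d(γ₋,γ₊)` (or non-rectifiable with
`d(γ(s),γ(t)) → ∞` towards the endpoints of `I`), and at every time `t` the shorter of
the two subcurves has length at most `A d_Ω(γ(t))`. -/
def IsUniformCurve {Ω : Type*} [MetricSpace Ω] (A : ℝ) (γ : ℝ → Ω) (I : Set ℝ) : Prop :=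
  I.Nonempty ∧ I.OrdConnected ∧ ContinuousOn γ I ∧
  ((varOn (distFun Ω) γ I ≠ ⊤ ∧
     ∃ gm gp : UniformSpace.Completion Ω,
       Tendsto (fun t => (γ t : UniformSpace.Completion Ω)) (leftEndFilter I) (𝓝 gm) ∧
       Tendsto (fun t => (γ t : UniformSpace.Completion Ω)) (rightEndFilter I) (𝓝 gp) ∧
       varOn (distFun Ω) γ I ≤ ENNReal.ofReal (A * dist gm gp)) ∨
   (varOn (distFun Ω) γ I = ⊤ ∧
     Tendsto (fun pq : ℝ × ℝ => dist (γ pq.1) (γ pq.2))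
       (leftEndFilter I ×ˢ rightEndFilter I) atTop)) ∧
  ∀ t ∈ I, min (varOn (distFun Ω) γ (I ∩ Iic t)) (varOn (distFun Ω) γ (I ∩ Ici t)) ≤
    ENNReal.ofReal (A * bdryDistWrt (distFun Ω) (γ t))


/-! Cut a curve `γ` from `x` to `y` in `Ω` into pieces so short that each lies in a ball where
the `∂`-Lipschitz condition applies. For a piece from `p` to `q` it gives
`d'(f p, f q) / d'(f p) ≤ L d(p, q) / d(p)`, which is small, so `f p` and `f q` are joined by an
`A`-uniform curve of length at most `A d'(f p, f q) ≤ d'(f p) / 2`. Along it `d_Ω'` stays above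
`d'(f p) / 2`, so its quasihyperbolic length is at most `2AL d(p, q) / d(p)`, which is at most `4AL`
times the quasihyperbolic length of the piece of `γ`. Concatenating these curves gives
`k'(f x, f y) ≤ 4AL ℓ_k(γ) ≤ 4A²L ℓ_k(γ)`. -/

section Curves

variable {Z : Type*} [MetricSpace Z]

lemma _root_.LipschitzOnWith.Icc_Icc {f : ℝ → Z} {K : NNReal} {a b c : ℝ}
    (hab : LipschitzOnWith K f (Icc a b))
    (hbc : LipschitzOnWith K f (Icc b c)) : LipschitzOnWith K f (Icc a c) := by
  refine LipschitzOnWith.of_dist_le_mul fun s hs t ht => ?_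
  wlog hst : s ≤ t generalizing s t
  · rw [dist_comm, dist_comm s]
    exact this t ht s hs (le_of_not_ge hst)
  rcases le_total t b with htb | hbt
  · exact hab.dist_le_mul s ⟨hs.1, hst.trans htb⟩ t ⟨ht.1, htb⟩
  rcases le_total b s with hbs | hsb
  · exact hbc.dist_le_mul s ⟨hbs, hs.2⟩ t ⟨hbs.trans hst, ht.2⟩
  calc dist (f s) (f t) ≤ dist (f s) (f b) + dist (f b) (f t) := dist_triangle _ _ _
    _ ≤ K * dist s b + K * dist b t :=
        add_le_add (hab.dist_le_mul s ⟨hs.1, hsb⟩ b ⟨hs.1.trans hsb, le_rfl⟩)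
          (hbc.dist_le_mul b ⟨le_rfl, hbt.trans ht.2⟩ t ⟨hbt, ht.2⟩)
    _ = K * dist s t := by
        rw [Real.dist_eq, Real.dist_eq, Real.dist_eq, abs_of_nonpos (by linarith),
          abs_of_nonpos (by linarith), abs_of_nonpos (by linarith)]
        ring

lemma _root_.HasUnitSpeedOn.lipschitzOnWith {σ : ℝ → Z} {s : Set ℝ}
    (h : HasUnitSpeedOn σ s) : LipschitzOnWith 1 σ s := by
  intro x hx y hy
  rw [ENNReal.coe_one, one_mul]
  wlog hxy : x ≤ y generalizing x y
  · rw [edist_comm, edist_comm x]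
    exact this hy hx (le_of_not_ge hxy)
  calc edist (σ x) (σ y) ≤ eVariationOn σ (s ∩ Icc x y) :=
        eVariationOn.edist_le σ ⟨hx, le_rfl, hxy⟩ ⟨hy, hxy, le_rfl⟩
    _ = edist x y := by
        rw [h hx hy, edist_dist, Real.dist_eq, abs_sub_comm, abs_of_nonneg (sub_nonneg.2 hxy),
          NNReal.coe_one, one_mul]

lemma continuousOn_variationOnFromTo {γ : ℝ → Z} {s : Set ℝ} (hγ : ContinuousOn γ s)
    (hbv : LocallyBoundedVariationOn γ s) {a : ℝ} (ha : a ∈ s) :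
    ContinuousOn (variationOnFromTo γ s a) s := by
  intro x hx
  have hl := variationOnFromTo.tendsto_left ha hx hbv ((hγ x hx).mono inter_subset_left)
  have hr := variationOnFromTo.tendsto_right ha hx hbv ((hγ x hx).mono inter_subset_left)
  rw [dist_self, sub_zero] at hl
  rw [dist_self, add_zero] at hr
  refine ((ContinuousWithinAt.union hl hr).insert).mono fun t ht => ?_
  rcases lt_trichotomy t x with h | rfl | h
  exacts [Or.inr (Or.inl ⟨ht, h⟩), Or.inl rfl, Or.inr (Or.inr ⟨ht, h⟩)]

/-- The witness is `naturalParameterization`; continuity of `γ` makes the arclength function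
map `[a, b]` onto `[0, ℓ(γ)]`. -/
lemma exists_lipschitzOnWith_reparam {γ : ℝ → Z} {a b : ℝ} (hab : a ≤ b)
    (hγ : ContinuousOn γ (Icc a b)) (hvar : eVariationOn γ (Icc a b) ≠ ⊤) :
    ∃ σ : ℝ → Z, LipschitzOnWith 1 σ (Icc 0 (eVariationOn γ (Icc a b)).toReal) ∧
      σ 0 = γ a ∧ σ (eVariationOn γ (Icc a b)).toReal = γ b := by
  have hbv : LocallyBoundedVariationOn γ (Icc a b) :=
    BoundedVariationOn.locallyBoundedVariationOn hvar
  have ha : a ∈ Icc a b := left_mem_Icc.2 hab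
  have hb : b ∈ Icc a b := right_mem_Icc.2 hab
  set φ := variationOnFromTo γ (Icc a b) a
  have hφa : φ a = 0 := variationOnFromTo.self γ _ a
  have hφb : φ b = (eVariationOn γ (Icc a b)).toReal := by
    simp only [φ, variationOnFromTo.eq_of_le _ _ hab, inter_self]
  have himage : φ '' Icc a b = Icc 0 (eVariationOn γ (Icc a b)).toReal := by
    refine Subset.antisymm ?_ ?_
    · rintro _ ⟨t, ht, rfl⟩
      rw [← hφa, ← hφb]
      exact ⟨variationOnFromTo.monotoneOn hbv ha ha ht ht.1,
        variationOnFromTo.monotoneOn hbv ha ht hb ht.2⟩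
    · rw [← hφa, ← hφb]
      exact intermediate_value_Icc hab (continuousOn_variationOnFromTo hγ hbv ha)
  have hσ := has_unit_speed_naturalParameterization γ hbv ha
  rw [himage] at hσ
  refine ⟨naturalParameterization γ (Icc a b) a, hσ.lipschitzOnWith, ?_, ?_⟩
  · rw [← hφa]
    exact edist_eq_zero.1 (edist_naturalParameterization_eq_zero hbv ha ha)
  · rw [← hφb]
    exact edist_eq_zero.1 (edist_naturalParameterization_eq_zero hbv ha hb)

end Curves

section BoundaryDistance

variable {Z : Type*} [MetricSpace Z]

lemma cauchyWrt_distFun_iff {u : ℕ → Z} : CauchyWrt (distFun Z) u ↔ CauchySeq u := by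
  rw [Metric.cauchySeq_iff]
  rfl

lemma convWrt_distFun_iff {u : ℕ → Z} :
    ConvWrt (distFun Z) u ↔ ∃ y, Tendsto u atTop (𝓝 y) :=
  exists_congr fun _ => tendsto_iff_dist_tendsto_zero.symm

lemma exists_tendsto_dist {u : ℕ → Z} (hu : CauchySeq u) (x : Z) :
    ∃ r, Tendsto (fun n => dist x (u n)) atTop (𝓝 r) :=
  cauchySeq_tendsto_of_complete ((LipschitzWith.dist_right x).uniformContinuous.comp_cauchySeq hu)

lemma bdryDistWrt_nonneg (x : Z) : 0 ≤ bdryDistWrt (distFun Z) x :=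
  Real.sInf_nonneg fun _ ⟨_, _, _, hu⟩ => ge_of_tendsto' hu fun _ => dist_nonneg

lemma bdryDistWrt_le {u : ℕ → Z} (hu : CauchySeq u) (hnc : ¬ ∃ y, Tendsto u atTop (𝓝 y))
    {x : Z} {r : ℝ} (hr : Tendsto (fun n => dist x (u n)) atTop (𝓝 r)) :
    bdryDistWrt (distFun Z) x ≤ r :=
  csInf_le ⟨0, fun _ ⟨_, _, _, hv⟩ => ge_of_tendsto' hv fun _ => dist_nonneg⟩
    ⟨u, cauchyWrt_distFun_iff.2 hu, convWrt_distFun_iff.not.2 hnc, hr⟩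

lemma le_bdryDistWrt (hinc : IncompleteWrt (distFun Z)) {x : Z} {c : ℝ}
    (h : ∀ u : ℕ → Z, CauchySeq u → (¬ ∃ y, Tendsto u atTop (𝓝 y)) →
      ∀ r, Tendsto (fun n => dist x (u n)) atTop (𝓝 r) → c ≤ r) :
    c ≤ bdryDistWrt (distFun Z) x := by
  obtain ⟨u, hu, hnc⟩ := hinc
  obtain ⟨r, hr⟩ := exists_tendsto_dist (cauchyWrt_distFun_iff.1 hu) x
  refine le_csInf ⟨r, u, hu, hnc, hr⟩ ?_
  rintro r ⟨v, hv, hnv, hr⟩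
  exact h v (cauchyWrt_distFun_iff.1 hv) (convWrt_distFun_iff.not.1 hnv) r hr

lemma bdryDistWrt_le_add_dist (hinc : IncompleteWrt (distFun Z)) (x y : Z) :
    bdryDistWrt (distFun Z) x ≤ bdryDistWrt (distFun Z) y + dist x y := by
  suffices bdryDistWrt (distFun Z) x - dist x y ≤ bdryDistWrt (distFun Z) y by linarith
  refine le_bdryDistWrt hinc fun u hu hnc r hr => ?_
  obtain ⟨r', hr'⟩ := exists_tendsto_dist hu x
  have hx := bdryDistWrt_le hu hnc hr'
  have : r' ≤ dist x y + r :=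
    le_of_tendsto_of_tendsto' hr' (tendsto_const_nhds.add hr) fun n => dist_triangle _ _ _
  linarith

lemma lipschitzWith_bdryDistWrt (hinc : IncompleteWrt (distFun Z)) :
    LipschitzWith 1 (bdryDistWrt (distFun Z)) :=
  LipschitzWith.of_le_add (bdryDistWrt_le_add_dist hinc)

/-- A Cauchy sequence with a subsequence in a compact ball converges, so `d_Z(x)` is at least
the radius of any compact ball around `x`. -/
lemma bdryDistWrt_pos (hloc : LocallyCompactWrt (distFun Z)) (hinc : IncompleteWrt (distFun Z))
    (x : Z) : 0 < bdryDistWrt (distFun Z) x := by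
  obtain ⟨r₀, hr₀, -, hcpt⟩ := hloc x 1 one_pos
  refine hr₀.trans_le (le_bdryDistWrt hinc fun u hu hnc r hr => ?_)
  by_contra! hlt
  obtain ⟨N, hN⟩ := (hr.eventually_lt_const hlt).exists_forall_of_atTop
  obtain ⟨y, -, φ, hφ, hconv⟩ :=
    hcpt (fun n => u (n + N)) fun n => (hN (n + N) (Nat.le_add_left N n)).le
  exact hnc ⟨y, tendsto_nhds_of_cauchySeq_of_subseq hu
    ((tendsto_add_atTop_nat N).comp hφ.tendsto_atTop) (tendsto_iff_dist_tendsto_zero.2 hconv)⟩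

end BoundaryDistance

section ConformalLength

variable {Z : Type*} [MetricSpace Z]

def IsConfLength (ρ : Z → ℝ) (x y : Z) (l : ℝ) : Prop :=
  ∃ (T : ℝ) (γ : ℝ → Z), 0 ≤ T ∧ LipschitzOnWith 1 γ (Icc 0 T) ∧ γ 0 = x ∧ γ T = y ∧
    l = ∫ t in (0:ℝ)..T, ρ (γ t)

lemma confDistWrt_distFun_eq_sInf (ρ : Z → ℝ) (x y : Z) :
    confDistWrt (distFun Z) ρ x y = sInf {l | IsConfLength ρ x y l} := by
  simp only [confDistWrt, IsConfLength, lipschitzOnWith_iff_dist_le_mul, NNReal.coe_one, one_mul,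
    Real.dist_eq]
  rfl

lemma IsConfLength.nonneg {ρ : Z → ℝ} (hρ : ∀ z, 0 ≤ ρ z) {x y : Z} {l : ℝ}
    (h : IsConfLength ρ x y l) : 0 ≤ l := by
  obtain ⟨T, γ, hT, -, -, -, rfl⟩ := h
  exact intervalIntegral.integral_nonneg hT fun t _ => hρ (γ t)

lemma confDistWrt_le_of_isConfLength {ρ : Z → ℝ} (hρ : ∀ z, 0 ≤ ρ z) {x y : Z} {l : ℝ}
    (h : IsConfLength ρ x y l) : confDistWrt (distFun Z) ρ x y ≤ l := by
  rw [confDistWrt_distFun_eq_sInf]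
  exact csInf_le ⟨0, fun _ hl' => hl'.nonneg hρ⟩ h

lemma isConfLength_self (ρ : Z → ℝ) (x : Z) : IsConfLength ρ x x 0 :=
  ⟨0, fun _ => x, le_rfl, (LipschitzWith.const x).lipschitzOnWith.weaken zero_le_one, rfl, rfl,
    by simp⟩

lemma IsConfLength.trans {ρ : Z → ℝ} (hρ : Continuous ρ) {x y z : Z} {l₁ l₂ : ℝ}
    (h₁ : IsConfLength ρ x y l₁) (h₂ : IsConfLength ρ y z l₂) :
    IsConfLength ρ x z (l₁ + l₂) := by
  obtain ⟨T₁, γ₁, hT₁, hγ₁, rfl, rfl, rfl⟩ := h₁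
  obtain ⟨T₂, γ₂, hT₂, hγ₂, hγ₂0, rfl, rfl⟩ := h₂
  set Γ : ℝ → Z := fun t => if t ≤ T₁ then γ₁ t else γ₂ (t - T₁)
  have hΓ₁ : EqOn Γ γ₁ (Icc 0 T₁) := fun t ht => if_pos ht.2
  have hΓ₂ : EqOn Γ (fun t => γ₂ (t - T₁)) (Icc T₁ (T₁ + T₂)) := by
    intro t ht
    rcases ht.1.eq_or_lt with rfl | hlt
    · simp [Γ, hγ₂0]
    · exact if_neg hlt.not_ge
  have hΓ : LipschitzOnWith 1 Γ (Icc 0 (T₁ + T₂)) := by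
    refine LipschitzOnWith.Icc_Icc (b := T₁) ?_ ?_ <;>
      refine LipschitzOnWith.of_dist_le_mul fun s hs t ht => ?_
    · rw [hΓ₁ hs, hΓ₁ ht]
      exact hγ₁.dist_le_mul s hs t ht
    · rw [hΓ₂ hs, hΓ₂ ht, ← dist_sub_right s t T₁]
      exact hγ₂.dist_le_mul _ ⟨by linarith [hs.1], by linarith [hs.2]⟩ _
        ⟨by linarith [ht.1], by linarith [ht.2]⟩
  have hint : ∀ a b, Icc a b ⊆ Icc 0 (T₁ + T₂) → a ≤ b →
      IntervalIntegrable (fun t => ρ (Γ t)) MeasureTheory.volume a b := fun a b hsub hab =>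
    (hρ.comp_continuousOn (hΓ.continuousOn.mono hsub)).intervalIntegrable_of_Icc hab
  refine ⟨T₁ + T₂, Γ, by linarith, hΓ, hΓ₁ ⟨le_rfl, hT₁⟩, ?_, ?_⟩
  · rw [hΓ₂ ⟨by linarith, le_rfl⟩]
    simp
  · rw [← intervalIntegral.integral_add_adjacent_intervals
      (hint 0 T₁ (Icc_subset_Icc le_rfl (by linarith)) hT₁)
      (hint T₁ (T₁ + T₂) (Icc_subset_Icc hT₁ le_rfl) (by linarith)),
      intervalIntegral.integral_congr
        (fun t ht => congrArg ρ (hΓ₁ (by rwa [uIcc_of_le hT₁] at ht))),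
      intervalIntegral.integral_congr (g := fun t => ρ (γ₂ (t - T₁)))
        (fun t ht => congrArg ρ (hΓ₂ (by rwa [uIcc_of_le (by linarith)] at ht))),
      intervalIntegral.integral_comp_sub_right (fun t => ρ (γ₂ t)), sub_self, add_sub_cancel_left]

lemma IsConfLength.sum {ρ : Z → ℝ} (hρ : Continuous ρ) (g : ℕ → Z) (l : ℕ → ℝ) (n : ℕ)
    (h : ∀ i < n, IsConfLength ρ (g i) (g (i + 1)) (l i)) :
    IsConfLength ρ (g 0) (g n) (∑ i ∈ Finset.range n, l i) := by
  induction n with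
  | zero => simpa using isConfLength_self ρ (g 0)
  | succ n ih =>
    rw [Finset.sum_range_succ]
    exact (ih fun i hi => h i (Nat.lt_succ_of_lt hi)).trans hρ (h n (Nat.lt_succ_self n))

/-- Subdivide `[0, T]` into `n` pieces of length `T / n < δ₀` and concatenate. -/
lemma exists_isConfLength_le_integral {ρ : Z → ℝ} (hρ : Continuous ρ) {g : ℝ → Z}
    {φ : ℝ → ℝ} {T δ₀ : ℝ} (hT : 0 ≤ T) (hδ₀ : 0 < δ₀)
    (hφ : IntervalIntegrable φ MeasureTheory.volume 0 T)
    (hloc : ∀ s t, 0 ≤ s → s ≤ t → t ≤ T → t - s < δ₀ →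
      ∃ l, IsConfLength ρ (g s) (g t) l ∧ l ≤ ∫ u in s..t, φ u) :
    ∃ l, IsConfLength ρ (g 0) (g T) l ∧ l ≤ ∫ u in (0:ℝ)..T, φ u := by
  obtain ⟨n, hn⟩ := exists_nat_gt (T / δ₀)
  have hn0 : (0:ℝ) < n := (div_nonneg hT hδ₀.le).trans_lt hn
  set a : ℕ → ℝ := fun i => i * (T / n)
  have ha0 : a 0 = 0 := by simp [a]
  have han : a n = T := by simp only [a]; field_simp
  have hstep : ∀ i, a (i + 1) - a i = T / n := fun i => by simp only [a]; push_cast; ring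
  have ha : ∀ i < n, 0 ≤ a i ∧ a i ≤ a (i + 1) ∧ a (i + 1) ≤ T ∧ a (i + 1) - a i < δ₀ := by
    intro i hi
    have hδ : 0 ≤ T / n := div_nonneg hT hn0.le
    refine ⟨by positivity, by linarith [hstep i], ?_, ?_⟩
    · rw [← han]
      exact mul_le_mul_of_nonneg_right (by exact_mod_cast hi) hδ
    · rw [hstep, div_lt_iff₀ hn0, mul_comm]
      exact (div_lt_iff₀ hδ₀).1 hn
  choose! len hlen using hloc
  have hpiece := fun i (hi : i < n) =>
    hlen (a i) (a (i + 1)) (ha i hi).1 (ha i hi).2.1 (ha i hi).2.2.1 (ha i hi).2.2.2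
  refine ⟨∑ i ∈ Finset.range n, len (a i) (a (i + 1)), ?_, ?_⟩
  · simpa [ha0, han] using
      IsConfLength.sum hρ (g ∘ a) (fun i => len (a i) (a (i + 1))) n fun i hi => (hpiece i hi).1
  · rw [← ha0, ← han, ← intervalIntegral.sum_integral_adjacent_intervals fun i hi =>
      hφ.mono_set (by rw [uIcc_of_le (ha i hi).2.1, uIcc_of_le hT]
                      exact Icc_subset_Icc (ha i hi).1 (ha i hi).2.2.1)]
    exact Finset.sum_le_sum fun i hi => (hpiece i (Finset.mem_range.1 hi)).2

end ConformalLength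

section QuasihyperbolicMetric

variable {Z : Type*} [MetricSpace Z]

def qhDensity (Z : Type*) [MetricSpace Z] (z : Z) : ℝ := (bdryDistWrt (distFun Z) z)⁻¹

lemma quasiHypWrt_distFun_eq_sInf (x y : Z) :
    quasiHypWrt (distFun Z) x y = sInf {l | IsConfLength (qhDensity Z) x y l} :=
  confDistWrt_distFun_eq_sInf _ x y

lemma qhDensity_nonneg (z : Z) : 0 ≤ qhDensity Z z := inv_nonneg.2 (bdryDistWrt_nonneg z)

lemma continuous_qhDensity (hloc : LocallyCompactWrt (distFun Z))
    (hinc : IncompleteWrt (distFun Z)) : Continuous (qhDensity Z) :=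
  (lipschitzWith_bdryDistWrt hinc).continuous.inv₀ fun z => (bdryDistWrt_pos hloc hinc z).ne'

lemma intervalIntegrable_qhDensity_comp (hloc : LocallyCompactWrt (distFun Z))
    (hinc : IncompleteWrt (distFun Z)) {γ : ℝ → Z} {s t : ℝ} (hst : s ≤ t)
    (hγ : ContinuousOn γ (Icc s t)) :
    IntervalIntegrable (fun u => qhDensity Z (γ u)) MeasureTheory.volume s t :=
  ((continuous_qhDensity hloc hinc).comp_continuousOn hγ).intervalIntegrable_of_Icc hst

/-- Along a `1`-Lipschitz curve of length at most `d_Z(γ s)`, the distance to the boundary at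
most doubles, so the density is at least `1 / (2 d_Z(γ s))`. -/
lemma div_two_mul_bdryDistWrt_le_integral (hloc : LocallyCompactWrt (distFun Z))
    (hinc : IncompleteWrt (distFun Z)) {γ : ℝ → Z} {s t : ℝ} (hst : s ≤ t)
    (hγ : LipschitzOnWith 1 γ (Icc s t)) (hlen : t - s ≤ bdryDistWrt (distFun Z) (γ s)) :
    (t - s) / (2 * bdryDistWrt (distFun Z) (γ s)) ≤ ∫ u in s..t, qhDensity Z (γ u) := by
  have hB := bdryDistWrt_pos hloc hinc (γ s)
  have hbound : ∀ u ∈ Icc s t, (2 * bdryDistWrt (distFun Z) (γ s))⁻¹ ≤ qhDensity Z (γ u) := by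
    intro u hu
    have h₁ : dist (γ u) (γ s) ≤ u - s := by
      simpa [Real.dist_eq, abs_of_nonneg (sub_nonneg.2 hu.1)] using
        hγ.dist_le_mul u hu s (left_mem_Icc.2 hst)
    have h₂ := bdryDistWrt_le_add_dist hinc (γ u) (γ s)
    exact inv_anti₀ (bdryDistWrt_pos hloc hinc _) (by linarith [hu.2])
  calc (t - s) / (2 * bdryDistWrt (distFun Z) (γ s))
      = ∫ _ in s..t, (2 * bdryDistWrt (distFun Z) (γ s))⁻¹ := by
        rw [intervalIntegral.integral_const, smul_eq_mul, div_eq_mul_inv]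
    _ ≤ ∫ u in s..t, qhDensity Z (γ u) :=
        intervalIntegral.integral_mono_on hst intervalIntegrable_const
          (intervalIntegrable_qhDensity_comp hloc hinc hst hγ.continuousOn) hbound

end QuasihyperbolicMetric

section UniformSpace

variable {Z : Type*} [MetricSpace Z] {A : ℝ}

lemma varOn_distFun (γ : ℝ → Z) (I : Set ℝ) : varOn (distFun Z) γ I = eVariationOn γ I :=
  iSup_congr fun _ => Finset.sum_congr rfl fun _ _ => by rw [distFun, edist_dist]

lemma continuousOn_of_continuousOnWrt {γ : ℝ → Z} {I : Set ℝ}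
    (h : ContinuousOnWrt (distFun Z) γ I) : ContinuousOn γ I :=
  Metric.continuousOn_iff.2 fun t ht ε hε => by
    obtain ⟨η, hη, hη'⟩ := h t ht ε hε
    exact ⟨η, hη, fun s hs hst => hη' s hs (by rwa [Real.dist_eq] at hst)⟩

lemma IsUniformSpcWrt.exists_lipschitzOnWith_curve (hU : IsUniformSpcWrt (distFun Z) A)
    (hA : 0 ≤ A) (x y : Z) :
    ∃ (T : ℝ) (σ : ℝ → Z), 0 ≤ T ∧ T ≤ A * dist x y ∧ LipschitzOnWith 1 σ (Icc 0 T) ∧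
      σ 0 = x ∧ σ T = y := by
  obtain ⟨a, b, γ, hab, hγ, rfl, rfl, hvar, -⟩ := hU.2.2.2 x y
  rw [varOn_distFun] at hvar
  obtain ⟨σ, hσ, hσa, hσb⟩ := exists_lipschitzOnWith_reparam hab
    (continuousOn_of_continuousOnWrt hγ) (ne_top_of_le_ne_top ENNReal.ofReal_ne_top hvar)
  exact ⟨_, σ, ENNReal.toReal_nonneg,
    ENNReal.toReal_le_of_le_ofReal (mul_nonneg hA dist_nonneg) hvar, hσ, hσa, hσb⟩

lemma IsUniformSpcWrt.exists_isConfLength_le (hU : IsUniformSpcWrt (distFun Z) A) (hA : 0 ≤ A)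
    {u v : Z} (huv : 2 * A * dist u v ≤ bdryDistWrt (distFun Z) u) :
    ∃ l, IsConfLength (qhDensity Z) u v l ∧ l ≤ 2 * A * dist u v / bdryDistWrt (distFun Z) u := by
  obtain ⟨T, σ, hT, hTle, hσ, rfl, rfl⟩ := hU.exists_lipschitzOnWith_curve hA u v
  obtain ⟨-, hloc, hinc, -⟩ := hU
  set B := bdryDistWrt (distFun Z) (σ 0)
  have hB : 0 < B := bdryDistWrt_pos hloc hinc _
  have hbound : ∀ t ∈ Icc 0 T, qhDensity Z (σ t) ≤ 2 / B := by
    intro t ht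
    have h₁ : dist (σ 0) (σ t) ≤ t := by
      simpa [Real.dist_eq, abs_of_nonneg ht.1] using hσ.dist_le_mul 0 (left_mem_Icc.2 hT) t ht
    have h₂ := bdryDistWrt_le_add_dist hinc (σ 0) (σ t)
    rw [qhDensity, ← inv_div]
    exact inv_anti₀ (by positivity) (by linarith [ht.2])
  refine ⟨_, ⟨T, σ, hT, hσ, rfl, rfl, rfl⟩, ?_⟩
  calc ∫ t in (0:ℝ)..T, qhDensity Z (σ t)
      ≤ ∫ _ in (0:ℝ)..T, 2 / B :=
        intervalIntegral.integral_mono_on hT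
          (intervalIntegrable_qhDensity_comp hloc hinc hT hσ.continuousOn)
          intervalIntegrable_const hbound
    _ = T * (2 / B) := by rw [intervalIntegral.integral_const, smul_eq_mul, sub_zero]
    _ ≤ A * dist (σ 0) (σ T) * (2 / B) := by gcongr
    _ = 2 * A * dist (σ 0) (σ T) / B := by ring

end UniformSpace

section PartialLipschitz

variable {Ω Ω' : Type*} [MetricSpace Ω] [MetricSpace Ω'] {A L lam : ℝ} {f : Ω → Ω'}

lemma PartialLipschitzWrt.exists_isConfLength_le
    (hpl : PartialLipschitzWrt (distFun Ω) (distFun Ω') L lam f)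
    (hΩ' : IsUniformSpcWrt (distFun Ω') A) (hA : 0 ≤ A) {p q : Ω}
    (hp : 0 < bdryDistWrt (distFun Ω) p) (hq : dist q p < lam * bdryDistWrt (distFun Ω) p)
    (hpq : 2 * A * L * dist p q ≤ bdryDistWrt (distFun Ω) p) :
    ∃ l, IsConfLength (qhDensity Ω') (f p) (f q) l ∧
      l ≤ 2 * A * L * dist p q / bdryDistWrt (distFun Ω) p := by
  have hfp := bdryDistWrt_pos hΩ'.2.1 hΩ'.2.2.1 (f p)
  have hpp : distFun Ω p p < lam * bdryDistWrt (distFun Ω) p := by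
    simpa [distFun] using dist_nonneg.trans_lt hq
  have hratio : 2 * A * dist (f p) (f q) / bdryDistWrt (distFun Ω') (f p) ≤
      2 * A * L * dist p q / bdryDistWrt (distFun Ω) p :=
    calc 2 * A * dist (f p) (f q) / bdryDistWrt (distFun Ω') (f p)
        = 2 * A * (dist (f p) (f q) / bdryDistWrt (distFun Ω') (f p)) := by ring
      _ ≤ 2 * A * (L * (dist p q / bdryDistWrt (distFun Ω) p)) := by
          gcongr
          exact hpl p p q hpp hq
      _ = 2 * A * L * dist p q / bdryDistWrt (distFun Ω) p := by ring
  have hnear : 2 * A * dist (f p) (f q) ≤ bdryDistWrt (distFun Ω') (f p) :=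
    (div_le_one hfp).1 (hratio.trans ((div_le_one hp).2 hpq))
  obtain ⟨l, hl, hle⟩ := hΩ'.exists_isConfLength_le hA hnear
  exact ⟨l, hl, hle.trans hratio⟩

/-- Cut `γ` into pieces shorter than `λ m / (1 + 2AL)`, where `m` is the least distance of `γ`
to `∂Ω`: on each piece the previous lemma applies and the density along `γ` is at least
`1 / (2 d_Ω)`. -/
lemma PartialLipschitzWrt.exists_isConfLength_comp_le
    (hpl : PartialLipschitzWrt (distFun Ω) (distFun Ω') L lam f)
    (hloc : LocallyCompactWrt (distFun Ω)) (hinc : IncompleteWrt (distFun Ω))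
    (hΩ' : IsUniformSpcWrt (distFun Ω') A) (hA : 0 ≤ A) (hL : 0 ≤ L) (hlam0 : 0 < lam)
    (hlam1 : lam ≤ 1) {γ : ℝ → Ω} {T : ℝ} (hT : 0 ≤ T) (hγ : LipschitzOnWith 1 γ (Icc 0 T)) :
    ∃ l, IsConfLength (qhDensity Ω') (f (γ 0)) (f (γ T)) l ∧
      l ≤ 4 * A * L * ∫ u in (0:ℝ)..T, qhDensity Ω (γ u) := by
  obtain ⟨s₀, -, hmin⟩ := isCompact_Icc.exists_isMinOn (nonempty_Icc.2 hT)
    ((lipschitzWith_bdryDistWrt hinc).continuous.comp_continuousOn hγ.continuousOn)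
  set m := bdryDistWrt (distFun Ω) (γ s₀)
  have hm : 0 < m := bdryDistWrt_pos hloc hinc _
  have hAL : 0 ≤ 2 * A * L := by positivity
  rw [← intervalIntegral.integral_const_mul]
  refine exists_isConfLength_le_integral (g := f ∘ γ) (continuous_qhDensity hΩ'.2.1 hΩ'.2.2.1) hT
    (δ₀ := lam * m / (1 + 2 * A * L)) (by positivity)
    ((intervalIntegrable_qhDensity_comp hloc hinc hT hγ.continuousOn).const_mul _)
    fun s t hs hst ht hlt => ?_
  have hγst : LipschitzOnWith 1 γ (Icc s t) := hγ.mono (Icc_subset_Icc hs ht)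
  have hms : m ≤ bdryDistWrt (distFun Ω) (γ s) := hmin ⟨hs, hst.trans ht⟩
  have hdist : dist (γ s) (γ t) ≤ t - s := by
    simpa [Real.dist_eq, abs_of_nonpos (sub_nonpos.2 hst)] using
      hγst.dist_le_mul s (left_mem_Icc.2 hst) t (right_mem_Icc.2 hst)
  have hlt' : (t - s) * (1 + 2 * A * L) < lam * m := (lt_div_iff₀ (by positivity)).1 hlt
  have hlam_m : lam * m ≤ lam * bdryDistWrt (distFun Ω) (γ s) := by gcongr
  have hlen : t - s ≤ bdryDistWrt (distFun Ω) (γ s) := by nlinarith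
  obtain ⟨l, hl, hle⟩ := hpl.exists_isConfLength_le hΩ' hA (bdryDistWrt_pos hloc hinc (γ s))
    (q := γ t) (by rw [dist_comm]; nlinarith) (by nlinarith [mul_le_mul_of_nonneg_left hdist hAL])
  refine ⟨l, hl, hle.trans ?_⟩
  have hB := bdryDistWrt_pos hloc hinc (γ s)
  calc 2 * A * L * dist (γ s) (γ t) / bdryDistWrt (distFun Ω) (γ s)
      ≤ 2 * A * L * (t - s) / bdryDistWrt (distFun Ω) (γ s) := by gcongr
    _ = 4 * A * L * ((t - s) / (2 * bdryDistWrt (distFun Ω) (γ s))) := by field_simp; ring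
    _ ≤ 4 * A * L * ∫ u in s..t, qhDensity Ω (γ u) := by
        gcongr
        exact div_two_mul_bdryDistWrt_le_integral hloc hinc hst hγst hlen
    _ = ∫ u in s..t, 4 * A * L * qhDensity Ω (γ u) := (intervalIntegral.integral_const_mul _ _).symm

end PartialLipschitz

theorem statement1_general {Ω Ω' : Type*} [MetricSpace Ω] [MetricSpace Ω']
    (A L lam : ℝ) (hA : 1 ≤ A) (hL : 0 ≤ L) (hlam0 : 0 < lam) (hlam1 : lam < 1)
    (hΩ : IsUniformSpcWrt (distFun Ω) A) (hΩ' : IsUniformSpcWrt (distFun Ω') A)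
    (f : Ω → Ω')
    (hpl : PartialLipschitzWrt (distFun Ω) (distFun Ω') L lam f) :
    ∀ x y : Ω, quasiHypWrt (distFun Ω') (f x) (f y) ≤
      (4 * A ^ 2 * L) * quasiHypWrt (distFun Ω) x y := by
  intro x y
  have hA0 : 0 ≤ A := by linarith
  have hS : {l | IsConfLength (qhDensity Ω) x y l}.Nonempty := by
    obtain ⟨T, σ, hT, -, hσ, hσ0, hσT⟩ := hΩ.exists_lipschitzOnWith_curve hA0 x y
    exact ⟨_, T, σ, hT, hσ, hσ0, hσT, rfl⟩
  rw [quasiHypWrt_distFun_eq_sInf x y, ← smul_eq_mul, ← Real.sInf_smul_of_nonneg (by positivity)]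
  refine le_csInf (hS.smul_set) ?_
  rintro _ ⟨_, ⟨T, γ, hT, hγ, rfl, rfl, rfl⟩, rfl⟩
  obtain ⟨l, hl, hle⟩ := hpl.exists_isConfLength_comp_le hΩ.2.1 hΩ.2.2.1 hΩ' hA0 hL hlam0
    hlam1.le hT hγ
  have hint : 0 ≤ ∫ u in (0:ℝ)..T, qhDensity Ω (γ u) :=
    intervalIntegral.integral_nonneg hT fun u _ => qhDensity_nonneg _
  calc quasiHypWrt (distFun Ω') (f (γ 0)) (f (γ T)) ≤ l :=
        confDistWrt_le_of_isConfLength qhDensity_nonneg hl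
    _ ≤ 4 * A * L * ∫ u in (0:ℝ)..T, qhDensity Ω (γ u) := hle
    _ ≤ 4 * A ^ 2 * L * ∫ u in (0:ℝ)..T, qhDensity Ω (γ u) := by gcongr; nlinarith

/-- If `f` is a continuous `∂`-Lipschitz map with data `(L, λ)` between
two `A`-uniform metric spaces, then the induced map between the quasihyperbolizations is
`H`-Lipschitz with `H = 4A²L`. -/
theorem statement1 {Ω Ω' : Type*} [MetricSpace Ω] [MetricSpace Ω']
    (A L lam : ℝ) (hA : 1 ≤ A) (hL : 0 ≤ L) (hlam0 : 0 < lam) (hlam1 : lam < 1)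
    (hΩ : IsUniformSpcWrt (distFun Ω) A) (hΩ' : IsUniformSpcWrt (distFun Ω') A)
    (f : Ω → Ω') (hf : Continuous f)
    (hpl : PartialLipschitzWrt (distFun Ω) (distFun Ω') L lam f) :
    ∀ x y : Ω, quasiHypWrt (distFun Ω') (f x) (f y) ≤
      (4 * A ^ 2 * L) * quasiHypWrt (distFun Ω) x y :=
  statement1_general A L lam hA hL hlam0 hlam1 hΩ hΩ' f hpl

end Paper

end
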